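/- arXiv:1810.02262 — 3 statements merged into one kernel-verified Lean document; each statement's English description precedes it below -/
import Mathlib

section
/- Let X be a compact metric space and f : X → X continuous. Suppose 𝒰 = {U_1,…,U_k} is a finite open cover of X with Lebesgue number δ > 0 such that diam(U_i) < ε for all i, and suppose that for every sequence (j_i) with f(cl(U_{j_i})) ∩ cl(U_{j_{i+1}}) ≠ ∅ there exists x ∈ X with f^i(x) ∈ cl(U_{j_i}) for all i. Then every δ-pseudo-orbit of f is 2ε-shadowed by a true orbit of f. -/
theorem stmt_5 {X : Type*} [MetricSpace X] [CompactSpace X]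
    (f : X → X) (hf : Continuous f) (ε : ℝ) (hε : 0 < ε)
    (k : ℕ) (U : Fin k → Set X)
    (hopen : ∀ i, IsOpen (U i)) (hcover : (⋃ i, U i) = Set.univ)
    (δ : ℝ) (hδ : 0 < δ)
    (hLeb : ∀ S : Set X, S.Nonempty → Metric.diam S < δ → ∃ i, S ⊆ U i)
    (hdiam : ∀ i, Metric.diam (U i) < ε)
    (horb : ∀ j : ℕ → Fin k,
      (∀ i : ℕ, (f '' closure (U (j i)) ∩ closure (U (j (i+1)))).Nonempty) →
      ∃ x : X, ∀ i : ℕ, f^[i] x ∈ closure (U (j i))) :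
    ∀ x : ℕ → X, (∀ i : ℕ, dist (x (i+1)) (f (x i)) < δ) →
      ∃ z : X, ∀ i : ℕ, dist (x i) (f^[i] z) < 2 * ε := by
  intro x hx
  -- choose j0 with x 0 ∈ U j0
  have h0 : x 0 ∈ ⋃ i, U i := hcover ▸ Set.mem_univ _
  obtain ⟨j0, hj0⟩ := Set.mem_iUnion.mp h0
  -- for each n, choose index containing {x (n+1), f (x n)}
  have hpick : ∀ n : ℕ, ∃ i, ({x (n+1), f (x n)} : Set X) ⊆ U i := by
    intro n
    apply hLeb
    · exact ⟨x (n+1), Set.mem_insert _ _⟩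
    · calc Metric.diam ({x (n+1), f (x n)} : Set X) = dist (x (n+1)) (f (x n)) :=
        Metric.diam_pair
      _ < δ := hx n
  choose pick hpickmem using hpick
  set j : ℕ → Fin k := fun i => Nat.casesOn i j0 pick with hj
  have hxj : ∀ i, x i ∈ U (j i) := by
    intro i
    cases i with
    | zero => exact hj0
    | succ n => exact hpickmem n (Set.mem_insert _ _)
  have hfxj : ∀ i, f (x i) ∈ U (j (i+1)) := by
    intro i
    exact hpickmem i (Set.mem_insert_of_mem _ rfl)
  obtain ⟨z, hz⟩ := horb j (by
    intro i
    exact ⟨f (x i), ⟨x i, subset_closure (hxj i), rfl⟩, subset_closure (hfxj i)⟩)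
  refine ⟨z, fun i => ?_⟩
  have hb : Bornology.IsBounded (closure (U (j i))) :=
    (isCompact_univ.isBounded).subset (Set.subset_univ _)
  calc dist (x i) (f^[i] z)
      ≤ Metric.diam (closure (U (j i))) :=
        Metric.dist_le_diam_of_mem hb (subset_closure (hxj i)) (hz i)
    _ = Metric.diam (U (j i)) := Metric.diam_closure _
    _ < ε := hdiam _
    _ < 2 * ε := by linarith
end

section
/- Let X be a compact metric space, g : X → X continuous, and 𝒰 = {U_1,…,U_k} a finite open cover. Suppose for each i there exists τ_i > 0 such that the τ_i-neighborhood of g(cl(U_i)) meets cl(U_j) if and only if j ∈ φ_{𝒰,g}(i). Then there exists τ > 0 such that every continuous h : X → X with ρ(g,h) < τ satisfies φ_{𝒰,h}(i) ⊆ φ_{𝒰,g}(i) for all i. -/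
/-- `φ_{𝒰,h}(i) = { j : h(cl(U_i)) ∩ cl(U_j) ≠ ∅ }`. -/
def phiCover {X : Type*} [TopologicalSpace X] {k : ℕ} (U : Fin k → Set X)
    (h : X → X) (i : Fin k) : Set (Fin k) :=
  {j | (h '' closure (U i) ∩ closure (U j)).Nonempty}

theorem stmt_7 {X : Type*} [MetricSpace X] [CompactSpace X]
    (g : C(X, X)) (k : ℕ) (U : Fin k → Set X)
    (hopen : ∀ i, IsOpen (U i)) (hcover : (⋃ i, U i) = Set.univ)
    (τs : Fin k → ℝ) (hτs : ∀ i, 0 < τs i)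
    (hnbhd : ∀ i j, (Metric.thickening (τs i) ((g : X → X) '' closure (U i))
        ∩ closure (U j)).Nonempty ↔ j ∈ phiCover U g i) :
    ∃ τ > (0:ℝ), ∀ h : C(X, X), dist g h < τ →
      ∀ i, phiCover U h i ⊆ phiCover U g i := by
  rcases Nat.eq_zero_or_pos k with hk | hk
  · exact ⟨1, one_pos, fun h _ i => absurd i.isLt (by omega)⟩
  have hne : Nonempty (Fin k) := ⟨⟨0, hk⟩⟩
  refine ⟨Finset.univ.inf' Finset.univ_nonempty τs, ?_, ?_⟩
  · exact (Finset.lt_inf'_iff _).2 fun i _ => hτs i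
  intro h hdist i j hj
  obtain ⟨y, ⟨x, hx, hxy⟩, hyj⟩ := hj
  refine (hnbhd i j).1 ⟨y, ?_, hyj⟩
  rw [Metric.mem_thickening_iff]
  refine ⟨g x, ⟨x, hx, rfl⟩, ?_⟩
  calc dist y (g x) = dist (g x) (h x) := by rw [hxy, dist_comm]
    _ ≤ dist g h := ContinuousMap.dist_apply_le_dist x
    _ < _ := hdist
    _ ≤ τs i := Finset.inf'_le _ (Finset.mem_univ i)
end

section
/- Let X be a compact metric space, 𝒰 = {U_1,…,U_k} a finite open cover with diam(U_i) < ε for all i, and h : X → X continuous. Suppose that for every sequence (j_i)_{i∈ℕ} with j_{i+1} ∈ φ_{𝒰,h}(j_i) there exists x ∈ X with h^i(x) ∈ cl(U_{j_i}) for all i. If δ > 0 is a Lebesgue number for 𝒰, then h has the property that every δ-pseudo-orbit of h is (2ε)-shadowed: specifically, for any δ-pseudo-orbit (x_i), choosing j_0 with x_0 ∈ U_{j_0} and, for i > 0, j_i with both x_i and h(x_{i-1}) in U_{j_i}, the resulting sequence satisfies j_{i+1} ∈ φ_{𝒰,h}(j_i), and any x with h^i(x) ∈ cl(U_{j_i})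 satisfies d(x_i, h^i(x)) ≤ diam(cl(U_{j_i})) < 2ε for all i. -/
theorem stmt_16 {X : Type*} [MetricSpace X] [CompactSpace X]
    (h : X → X) (hh : Continuous h) (ε : ℝ) (hε : 0 < ε)
    (k : ℕ) (U : Fin k → Set X)
    (hopen : ∀ i, IsOpen (U i)) (hcover : (⋃ i, U i) = Set.univ)
    (hdiam : ∀ i, Metric.diam (U i) < ε)
    (horb : ∀ j : ℕ → Fin k, (∀ i : ℕ, j (i+1) ∈ phiCover U h (j i)) →
      ∃ x : X, ∀ i : ℕ, h^[i] x ∈ closure (U (j i)))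
    (δ : ℝ) (hδ : 0 < δ)
    (hLeb : ∀ S : Set X, S.Nonempty → Metric.diam S < δ → ∃ i, S ⊆ U i) :
    ∀ x : ℕ → X, (∀ i : ℕ, dist (x (i+1)) (h (x i)) < δ) →
      ∃ j : ℕ → Fin k, x 0 ∈ U (j 0) ∧
        (∀ i : ℕ, x (i+1) ∈ U (j (i+1)) ∧ h (x i) ∈ U (j (i+1))) ∧
        (∀ i : ℕ, j (i+1) ∈ phiCover U h (j i)) ∧
        ∀ z : X, (∀ i : ℕ, h^[i] z ∈ closure (U (j i))) →
          ∀ i : ℕ, dist (x i) (h^[i] z) < 2 * ε := by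
  intro x hx
  -- choose j 0
  have h0 : ∃ i, x 0 ∈ U i := by
    have : x 0 ∈ ⋃ i, U i := hcover ▸ Set.mem_univ _
    exact Set.mem_iUnion.1 this
  -- choose j (i+1)
  have hstep : ∀ i : ℕ, ∃ m, x (i+1) ∈ U m ∧ h (x i) ∈ U m := by
    intro i
    obtain ⟨m, hm⟩ := hLeb {x (i+1), h (x i)} ⟨_, Set.mem_insert _ _⟩ (by
      have : Metric.diam {x (i+1), h (x i)} = dist (x (i+1)) (h (x i)) :=
        Metric.diam_pair
      rw [this]; exact hx i)
    exact ⟨m, hm (Set.mem_insert _ _), hm (Set.mem_insert_of_mem _ rfl)⟩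
  choose j0 hj0 using h0
  choose js hjs1 hjs2 using hstep
  refine ⟨fun n => Nat.rec j0 (fun i _ => js i) n, hj0, fun i => ⟨hjs1 i, hjs2 i⟩, ?_, ?_⟩
  · intro i
    have hxi : x i ∈ U (Nat.rec j0 (fun i _ => js i) i : Fin k) := by
      cases i with
      | zero => exact hj0
      | succ n => exact hjs1 n
    exact ⟨h (x i), ⟨x i, subset_closure hxi, rfl⟩, subset_closure (hjs2 i)⟩
  · intro z hz i
    have hxi : x i ∈ U (Nat.rec j0 (fun i _ => js i) i : Fin k) := by
      cases i with
      | zero => exact hj0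
      | succ n => exact hjs1 n
    have hb : Bornology.IsBounded (closure (U (Nat.rec j0 (fun i _ => js i) i : Fin k))) :=
      (isClosed_closure.isCompact).isBounded
    calc dist (x i) (h^[i] z)
        ≤ Metric.diam (closure (U (Nat.rec j0 (fun i _ => js i) i : Fin k))) :=
          Metric.dist_le_diam_of_mem hb (subset_closure hxi) (hz i)
      _ = Metric.diam (U (Nat.rec j0 (fun i _ => js i) i : Fin k)) := Metric.diam_closure _
      _ < ε := hdiam _
      _ < 2 * ε := by linarith
end
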